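/- Let n ≥ 2 be an integer and let c_1, …, c_{2n−1} and d_k = (−1)^k c_k be as defined. Then for all real numbers p and q: (p − q)²·( p^{2n} + Σ_{k=1}^{2n−1} c_k·p^{2n−k}·q^k + (−1)^n·q^{2n}/(2n+1) ) = p^{2n+2} + Σ_{k=1}^{n} ((−1)^{k+1}/(2k−1))·C(n+1,k)·p^{2n−2k+2}·q^{2k} + (−1)^n·q^{2n+2}/(2n+1) + (c_1 − 2)·p^{2n+1}·q, and (p + q)²·( p^{2n} + Σ_{k=1}^{2n−1} d_k·p^{2n−k}·q^k + (−1)^n·q^{2n}/(2n+1) ) = p^{2n+2} + Σ_{k=1}^{n} ((−1)^{k+1}/(2k−1))·C(n+1,k)·p^{2n−2k+2}·q^{2k} + (−1)^n·q^{2n+2}/(2n+1) + (2 − c_1)·p^{2n+1}·q. -/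

import Mathlib

/-!
Put `c₀ = 1` and `c_{2n} = (-1)^n/(2n+1)`. Then every `c_k`, `0 ≤ k ≤ 2n`, is given by the single
formula `c_k = Σ_{2j ≥ k+2} a_j (2j-1-k)/(2j-1)` with `a_j = (-1)^{j+1} C(n+1,j)`; for `k = 1` this
uses `Σ_j a_j = 1`. Exchanging the two sums,
`Σ_k c_k p^{2n-k} q^k = Σ_j a_j/(2j-1) · p^{2n+2-2j} · Σ_{k<2j-1} (2j-1-k) p^{2j-2-k} q^k`,
and `(p-q)² Σ_{k<m} (m-k) p^{m-1-k} q^k = m p^{m+1} - (m+1) p^m q + q^{m+1}`. Summing over `j`, the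
`p^{2n+2}` coefficients add up to `Σ_j a_j = 1` and the `p^{2n+1} q` coefficients to
`-Σ_j a_j 2j/(2j-1) = c₁ - 2`. The second identity is the first one at `-q`.
-/

open Finset

/-- The coefficients `c_k`, `k = 1, …, 2n−1`, of the auxiliary function `h`:
`c₁ = 1/2 + Σ_{j=1}^{n+1} (−1)^{j+1}·((2j−3)/(2(2j−1)))·C(n+1,j)`;
`c_{2m} = Σ_{j=m+1}^{n+1} (−1)^{j+1}·((2j−2m−1)/(2j−1))·C(n+1,j)` for `m = 1,…,n−1`;
`c_{2m−1} = Σ_{j=m+1}^{n+1} (−1)^{j+1}·((2j−2m)/(2j−1))·C(n+1,j)` for `m = 2,…,n`.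
(For `k = 2m` and `k = 2m−1` alike, the numerator is `2j−(k+1)` and the summation starts at
`j = (k+1)/2 + 1` with natural division.) -/
noncomputable def gmchC (n k : ℕ) : ℝ :=
  if k = 1 then
    1 / 2 + ∑ j ∈ Finset.Icc 1 (n + 1),
      (-1 : ℝ) ^ (j + 1) * ((2 * (j : ℝ) - 3) / (2 * (2 * (j : ℝ) - 1))) * ((n + 1).choose j : ℝ)
  else
    ∑ j ∈ Finset.Icc ((k + 1) / 2 + 1) (n + 1),
      (-1 : ℝ) ^ (j + 1) * ((2 * (j : ℝ) - ((k : ℝ) + 1)) / (2 * (j : ℝ) - 1)) *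
        ((n + 1).choose j : ℝ)

/-- The coefficients `d_k = (−1)^k·c_k`, `k = 1, …, 2n−1`. -/
noncomputable def gmchD (n k : ℕ) : ℝ := (-1 : ℝ) ^ k * gmchC n k

theorem sub_sq_mul_sum_range_sub_mul_pow_mul_pow {R : Type*} [CommRing R] (p q : R) (m : ℕ) :
    (p - q) ^ 2 * ∑ k ∈ range m, ((m : R) - k) * p ^ (m - 1 - k) * q ^ k =
      m * p ^ (m + 1) - (m + 1) * p ^ m * q + q ^ (m + 1) := by
  induction m with
  | zero => simp
  | succ m ih =>
    have hgeom := geom_sum₂_mul q p (m + 1)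
    have hsplit : ∑ k ∈ range (m + 1), ((↑(m + 1) : R) - k) * p ^ (m - k) * q ^ k =
        p * ∑ k ∈ range m, ((m : R) - k) * p ^ (m - 1 - k) * q ^ k +
          ∑ k ∈ range (m + 1), q ^ k * p ^ (m - k) := by
      rw [sum_range_succ, sum_range_succ _ m, mul_sum, ← add_assoc, ← sum_add_distrib]
      congr 1
      · refine sum_congr rfl fun k hk => ?_
        rw [show m - k = (m - 1 - k) + 1 by grind]
        push_cast
        ring
      · simp
    simp only [Nat.add_sub_cancel] at hgeom ⊢
    rw [hsplit]
    push_cast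
    linear_combination p * ih - (p - q) * hgeom

theorem sum_Icc_neg_one_pow_succ_mul_choose {R : Type*} [CommRing R] (n : ℕ) :
    ∑ j ∈ Icc 1 (n + 1), (-1 : R) ^ (j + 1) * ((n + 1).choose j : R) = 1 := by
  have h := congrArg (Int.cast : ℤ → R) (Int.alternating_sum_range_choose_of_ne n.add_one_ne_zero)
  push_cast at h
  rw [range_eq_Ico, sum_eq_sum_Ico_succ_bot (by omega), zero_add, Ico_add_one_right_eq_Icc] at h
  simp only [pow_succ, mul_neg_one, neg_mul, sum_neg_distrib]
  simp only [pow_zero, Nat.choose_zero_right, Nat.cast_one, mul_one] at h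
  linear_combination -h

theorem two_mul_natCast_sub_one_ne_zero {j : ℕ} (hj : 1 ≤ j) : 2 * (j : ℝ) - 1 ≠ 0 := by
  have : (1 : ℝ) ≤ j := by exact_mod_cast hj
  linarith

theorem gmchC_one (n : ℕ) :
    gmchC n 1 = ∑ j ∈ Icc 1 (n + 1),
      (-1 : ℝ) ^ (j + 1) * ((2 * (j : ℝ) - 2) / (2 * (j : ℝ) - 1)) * ((n + 1).choose j : ℝ) := by
  have hsplit : ∀ j ∈ Icc 1 (n + 1),
      (-1 : ℝ) ^ (j + 1) * ((2 * (j : ℝ) - 2) / (2 * (j : ℝ) - 1)) * ((n + 1).choose j : ℝ) =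
        1 / 2 * ((-1 : ℝ) ^ (j + 1) * ((n + 1).choose j : ℝ)) +
          (-1 : ℝ) ^ (j + 1) * ((2 * (j : ℝ) - 3) / (2 * (2 * (j : ℝ) - 1))) *
            ((n + 1).choose j : ℝ) := by
    intro j hj
    have := two_mul_natCast_sub_one_ne_zero (mem_Icc.mp hj).1
    field_simp
    ring
  rw [sum_congr rfl hsplit, sum_add_distrib, ← mul_sum, sum_Icc_neg_one_pow_succ_mul_choose,
    mul_one, gmchC, if_pos rfl]

theorem gmchC_eq_sum (n k : ℕ) :
    gmchC n k = ∑ j ∈ Icc ((k + 1) / 2 + 1) (n + 1),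
      (-1 : ℝ) ^ (j + 1) * ((2 * (j : ℝ) - ((k : ℝ) + 1)) / (2 * (j : ℝ) - 1)) *
        ((n + 1).choose j : ℝ) := by
  rcases eq_or_ne k 1 with rfl | hk
  · rw [gmchC_one, ← insert_Icc_add_one_left_eq_Icc (by omega), sum_insert (by simp)]
    norm_num
  · rw [gmchC, if_neg hk]

theorem gmchC_zero (n : ℕ) : gmchC n 0 = 1 := by
  rw [gmchC_eq_sum]
  refine (sum_congr rfl fun j hj => ?_).trans (sum_Icc_neg_one_pow_succ_mul_choose n)
  rw [Nat.cast_zero, zero_add, div_self (two_mul_natCast_sub_one_ne_zero (mem_Icc.mp hj).1),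
    mul_one]

theorem gmchC_two_mul (n : ℕ) : gmchC n (2 * n) = (-1 : ℝ) ^ n / (2 * n + 1) := by
  rw [gmchC_eq_sum, show (2 * n + 1) / 2 + 1 = n + 1 by omega, Icc_self, sum_singleton,
    Nat.choose_self]
  push_cast
  rw [show 2 * ((n : ℝ) + 1) - (2 * n + 1) = 1 by ring,
    show 2 * ((n : ℝ) + 1) - 1 = 2 * n + 1 by ring]
  ring

theorem sum_Icc_neg_one_pow_succ_mul_two_mul_div (n : ℕ) :
    ∑ j ∈ Icc 1 (n + 1), (-1 : ℝ) ^ (j + 1) * (2 * (j : ℝ) / (2 * (j : ℝ) - 1)) *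
      ((n + 1).choose j : ℝ) = 2 - gmchC n 1 := by
  have hsplit : ∀ j ∈ Icc 1 (n + 1),
      (-1 : ℝ) ^ (j + 1) * (2 * (j : ℝ) / (2 * (j : ℝ) - 1)) * ((n + 1).choose j : ℝ) =
        2 * ((-1 : ℝ) ^ (j + 1) * ((n + 1).choose j : ℝ)) -
          (-1 : ℝ) ^ (j + 1) * ((2 * (j : ℝ) - 2) / (2 * (j : ℝ) - 1)) *
            ((n + 1).choose j : ℝ) := by
    intro j hj
    have := two_mul_natCast_sub_one_ne_zero (mem_Icc.mp hj).1
    field_simp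
    ring
  rw [sum_congr rfl hsplit, sum_sub_distrib, ← mul_sum, sum_Icc_neg_one_pow_succ_mul_choose,
    gmchC_one, mul_one]

theorem sum_range_gmchC_mul_pow_mul_pow (n : ℕ) (p q : ℝ) :
    ∑ k ∈ range (2 * n + 1), gmchC n k * p ^ (2 * n - k) * q ^ k =
      ∑ j ∈ Icc 1 (n + 1), (-1 : ℝ) ^ (j + 1) * ((n + 1).choose j : ℝ) / (2 * (j : ℝ) - 1) *
        p ^ (2 * n + 2 - 2 * j) *
          ∑ k ∈ range (2 * j - 1),
            (((2 * j - 1 : ℕ) : ℝ) - k) * p ^ (2 * j - 1 - 1 - k) * q ^ k := by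
  simp only [gmchC_eq_sum, sum_mul, mul_sum]
  refine (sum_comm' (t' := Icc 1 (n + 1)) (s' := fun j => range (2 * j - 1))
    fun k j => by simp only [mem_Icc, mem_range]; omega).trans ?_
  refine sum_congr rfl fun j hj => sum_congr rfl fun k hk => ?_
  have hj : 1 ≤ j := (mem_Icc.mp hj).1
  rw [show 2 * n - k = (2 * n + 2 - 2 * j) + (2 * j - 1 - 1 - k) by grind, pow_add,
    Nat.cast_sub (by omega : 1 ≤ 2 * j)]
  push_cast
  ring

theorem sub_sq_mul_sum_range_gmchC_mul_pow_mul_pow (n : ℕ) (p q : ℝ) :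
    (p - q) ^ 2 * ∑ k ∈ range (2 * n + 1), gmchC n k * p ^ (2 * n - k) * q ^ k =
      p ^ (2 * n + 2) +
        ∑ j ∈ Icc 1 (n + 1), (-1 : ℝ) ^ (j + 1) / (2 * (j : ℝ) - 1) * ((n + 1).choose j : ℝ) *
          p ^ (2 * n + 2 - 2 * j) * q ^ (2 * j) -
        (2 - gmchC n 1) * p ^ (2 * n + 1) * q := by
  have hterm : ∀ j ∈ Icc 1 (n + 1),
      (p - q) ^ 2 * ((-1 : ℝ) ^ (j + 1) * ((n + 1).choose j : ℝ) / (2 * (j : ℝ) - 1) *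
        p ^ (2 * n + 2 - 2 * j) *
          ∑ k ∈ range (2 * j - 1), (((2 * j - 1 : ℕ) : ℝ) - k) * p ^ (2 * j - 1 - 1 - k) * q ^ k) =
        (-1 : ℝ) ^ (j + 1) * ((n + 1).choose j : ℝ) * p ^ (2 * n + 2) -
          (-1 : ℝ) ^ (j + 1) * (2 * (j : ℝ) / (2 * (j : ℝ) - 1)) * ((n + 1).choose j : ℝ) *
            (p ^ (2 * n + 1) * q) +
          (-1 : ℝ) ^ (j + 1) / (2 * (j : ℝ) - 1) * ((n + 1).choose j : ℝ) *
            p ^ (2 * n + 2 - 2 * j) * q ^ (2 * j) := by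
    intro j hj
    have hj1 : 1 ≤ j := (mem_Icc.mp hj).1
    have hj2 : j ≤ n + 1 := (mem_Icc.mp hj).2
    rw [mul_left_comm, sub_sq_mul_sum_range_sub_mul_pow_mul_pow, Nat.sub_add_cancel (by omega),
      show 2 * n + 2 = (2 * n + 2 - 2 * j) + 2 * j by omega, pow_add,
      show 2 * n + 1 = (2 * n + 2 - 2 * j) + (2 * j - 1) by omega, pow_add,
      Nat.cast_sub (by omega : 1 ≤ 2 * j), Nat.add_sub_cancel_right]
    have := two_mul_natCast_sub_one_ne_zero hj1
    push_cast
    field_simp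
    ring
  rw [sum_range_gmchC_mul_pow_mul_pow, mul_sum, sum_congr rfl hterm, sum_add_distrib,
    sum_sub_distrib, ← sum_mul, ← sum_mul, sum_Icc_neg_one_pow_succ_mul_choose,
    sum_Icc_neg_one_pow_succ_mul_two_mul_div]
  ring

theorem gmchC_polynomial_eq_sum_range {n : ℕ} (hn : 1 ≤ n) (p q : ℝ) :
    p ^ (2 * n) + (∑ k ∈ Icc 1 (2 * n - 1), gmchC n k * p ^ (2 * n - k) * q ^ k) +
        (-1 : ℝ) ^ n * q ^ (2 * n) / (2 * (n : ℝ) + 1) =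
      ∑ k ∈ range (2 * n + 1), gmchC n k * p ^ (2 * n - k) * q ^ k := by
  have hIco : Ico 1 (2 * n) = Icc 1 (2 * n - 1) := by ext; simp only [mem_Ico, mem_Icc]; omega
  rw [range_eq_Ico, sum_eq_sum_Ico_succ_bot (by omega), sum_Ico_succ_top (by omega), zero_add,
    hIco, gmchC_zero, gmchC_two_mul, Nat.sub_zero, Nat.sub_self]
  ring

theorem sub_sq_mul_gmchC_polynomial {n : ℕ} (hn : 1 ≤ n) (p q : ℝ) :
    (p - q) ^ 2 *
        (p ^ (2 * n) + (∑ k ∈ Finset.Icc 1 (2 * n - 1), gmchC n k * p ^ (2 * n - k) * q ^ k) +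
          (-1 : ℝ) ^ n * q ^ (2 * n) / (2 * (n : ℝ) + 1)) =
      p ^ (2 * n + 2) +
        (∑ k ∈ Finset.Icc 1 n,
          (-1 : ℝ) ^ (k + 1) / (2 * (k : ℝ) - 1) * ((n + 1).choose k : ℝ) *
            p ^ (2 * n - 2 * k + 2) * q ^ (2 * k)) +
        (-1 : ℝ) ^ n * q ^ (2 * n + 2) / (2 * (n : ℝ) + 1) +
        (gmchC n 1 - 2) * p ^ (2 * n + 1) * q := by
  rw [gmchC_polynomial_eq_sum_range hn, sub_sq_mul_sum_range_gmchC_mul_pow_mul_pow,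
    sum_Icc_succ_top (by omega)]
  have hexp : ∀ k ∈ Icc 1 n, 2 * n + 2 - 2 * k = 2 * n - 2 * k + 2 := fun k hk => by
    simp only [mem_Icc] at hk; omega
  rw [sum_congr rfl fun k hk => by rw [hexp k hk], Nat.choose_self,
    show 2 * n + 2 - 2 * (n + 1) = 0 by omega, show 2 * (n + 1) = 2 * n + 2 by ring]
  push_cast
  ring

/-- For an integer `n ≥ 2` and the coefficients `c_k`, `d_k = (−1)^k c_k` as
defined, for all real `p`, `q`:
`(p − q)²·(p^{2n} + Σ_{k=1}^{2n−1} c_k·p^{2n−k}·q^k + (−1)^n·q^{2n}/(2n+1))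
  = p^{2n+2} + Σ_{k=1}^{n} ((−1)^{k+1}/(2k−1))·C(n+1,k)·p^{2n−2k+2}·q^{2k}
    + (−1)^n·q^{2n+2}/(2n+1) + (c₁ − 2)·p^{2n+1}·q`, and
`(p + q)²·(p^{2n} + Σ_{k=1}^{2n−1} d_k·p^{2n−k}·q^k + (−1)^n·q^{2n}/(2n+1))
  = p^{2n+2} + Σ_{k=1}^{n} ((−1)^{k+1}/(2k−1))·C(n+1,k)·p^{2n−2k+2}·q^{2k}
    + (−1)^n·q^{2n+2}/(2n+1) + (2 − c₁)·p^{2n+1}·q`. -/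
theorem stmt8 (n : ℕ) (hn : 2 ≤ n) (p q : ℝ) :
    (p - q) ^ 2 *
        (p ^ (2 * n) + (∑ k ∈ Finset.Icc 1 (2 * n - 1), gmchC n k * p ^ (2 * n - k) * q ^ k) +
          (-1 : ℝ) ^ n * q ^ (2 * n) / (2 * (n : ℝ) + 1)) =
      p ^ (2 * n + 2) +
        (∑ k ∈ Finset.Icc 1 n,
          (-1 : ℝ) ^ (k + 1) / (2 * (k : ℝ) - 1) * ((n + 1).choose k : ℝ) *
            p ^ (2 * n - 2 * k + 2) * q ^ (2 * k)) +
        (-1 : ℝ) ^ n * q ^ (2 * n + 2) / (2 * (n : ℝ) + 1) +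
        (gmchC n 1 - 2) * p ^ (2 * n + 1) * q ∧
    (p + q) ^ 2 *
        (p ^ (2 * n) + (∑ k ∈ Finset.Icc 1 (2 * n - 1), gmchD n k * p ^ (2 * n - k) * q ^ k) +
          (-1 : ℝ) ^ n * q ^ (2 * n) / (2 * (n : ℝ) + 1)) =
      p ^ (2 * n + 2) +
        (∑ k ∈ Finset.Icc 1 n,
          (-1 : ℝ) ^ (k + 1) / (2 * (k : ℝ) - 1) * ((n + 1).choose k : ℝ) *
            p ^ (2 * n - 2 * k + 2) * q ^ (2 * k)) +
        (-1 : ℝ) ^ n * q ^ (2 * n + 2) / (2 * (n : ℝ) + 1) +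
        (2 - gmchC n 1) * p ^ (2 * n + 1) * q := by
  have hn1 : 1 ≤ n := by omega
  refine ⟨sub_sq_mul_gmchC_polynomial hn1 p q, ?_⟩
  have h := sub_sq_mul_gmchC_polynomial hn1 p (-q)
  have hD : ∀ k, gmchC n k * p ^ (2 * n - k) * (-q) ^ k = gmchD n k * p ^ (2 * n - k) * q ^ k :=
    fun k => by rw [gmchD, neg_pow]; ring
  simp only [hD, sub_neg_eq_add, Even.neg_pow (even_two_mul _),
    Even.neg_pow (⟨n + 1, by ring⟩ : Even (2 * n + 2))] at h
  linear_combination h
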